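/- arXiv:2504.15242 — 4 statements merged into one kernel-verified Lean document; each statement's English description precedes it below -/
import Mathlib

section
/- Let χ : ℝ → ℝ be a kernel: χ ∈ L¹(ℝ), χ is bounded on a neighborhood of 0, ∑_{i∈ℤ} χ(z − i) = 1 for every z ∈ ℝ, and there exists β > 0 with m_β(χ) := sup_{z∈ℝ} ∑_{i∈ℤ} |χ(z − i)| · |z − i|^β < ∞. Fix α > 0. Let g : ℝ → ℝ be measurable and bounded on ℝ. Then at every point y ∈ ℝ at which g is continuous, lim_{w→∞} (T_w g)(y) = g(y). -/
open Real Filter MeasureTheory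

/-- Discrete absolute moment of order `0`: `μ₀(χ) = sup_{z ∈ ℝ} ∑_{i ∈ ℤ} |χ(z - i)|`. -/
noncomputable def mom0 (χ : ℝ → ℝ) : ℝ :=
  ⨆ z : ℝ, ∑' i : ℤ, |χ (z - ↑i)|

/-- The modified Kantorovich sampling operator
`(T_w g)(y) = ∑_{i ∈ ℤ} χ(wy - i) ∫₀¹ g((i + t^α)/(w+1)) dt`. -/
noncomputable def T (χ : ℝ → ℝ) (α w : ℝ) (g : ℝ → ℝ) (y : ℝ) : ℝ :=
  ∑' i : ℤ, χ (w * y - ↑i) * ∫ t in (0:ℝ)..(1:ℝ), g ((↑i + t ^ α) / (w + 1))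

/-!
Since `∑ χ(z - i) = 1`, `T_w g y - g y = ∑ χ(wy - i) (I_i - g y)` with
`I_i = ∫₀¹ g((i + t^α)/(w+1)) dt`. Given `ε`, take `δ` from the continuity of `g` at `y` and put
`R_w = δ(w+1) - (1 + |y|)`. If `|wy - i| < R_w`, all the points `(i + t^α)/(w+1)` lie within
`δ` of `y`, so `|I_i - g y| ≤ ε`; otherwise, with `|g| ≤ B`,
`|I_i - g y| ≤ 2B ≤ 2B (|wy - i| / R_w)^β`. Summing,
`|T_w g y - g y| ≤ ε m₀(χ) + 2B m_β(χ) / R_w^β`, and `R_w → ∞`. The zeroth moment `m₀(χ)` is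
finite because `χ` is bounded: near `0` by assumption, away from `0` by the moment of order `β`.
-/

lemma round_eq_of_abs_sub_lt_half {x : ℝ} {n : ℤ} (h : |x - n| < 1 / 2) : round x = n := by
  rw [round_eq_iff]
  constructor <;> linarith [abs_lt.mp h]

lemma abs_le_abs_mul_rpow_div {a u r β : ℝ} (hr : 0 < r) (hru : r ≤ |u|) (hβ : 0 ≤ β) :
    |a| ≤ |a| * |u| ^ β / r ^ β := by
  rw [le_div_iff₀ (rpow_pos_of_pos hr β)]
  exact mul_le_mul_of_nonneg_left (rpow_le_rpow hr.le hru hβ) (abs_nonneg a)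

section Kernel

variable {χ : ℝ → ℝ} {β : ℝ}

lemma summable_abs_of_summable_abs_mul_rpow (hβ : 0 ≤ β)
    (hsumm : ∀ z : ℝ, Summable fun i : ℤ => |χ (z - i)| * |z - i| ^ β) (z : ℝ) :
    Summable fun i : ℤ => |χ (z - i)| := by
  refine (hsumm z).of_norm_bounded_eventually ?_
  have hnear : {i : ℤ | |z - i| < 1}.Finite :=
    (Set.finite_Icc ⌈z - 1⌉ ⌊z + 1⌋).subset fun i (hi : |z - i| < 1) => by
      have := abs_lt.mp hi
      exact ⟨Int.ceil_le.mpr (by linarith), Int.le_floor.mpr (by linarith)⟩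
  refine hnear.subset fun i (hi : ¬‖|χ (z - i)|‖ ≤ |χ (z - i)| * |z - i| ^ β) => ?_
  by_contra hfar
  rw [Real.norm_eq_abs, abs_abs] at hi
  exact hi (abs_le_abs_mul_rpow_div one_pos (not_lt.mp hfar) hβ |>.trans_eq (by simp))

lemma abs_le_max_of_abs_le_on_Icc {M d C : ℝ}
    (hsumm : ∀ z : ℝ, Summable fun i : ℤ => |χ (z - i)| * |z - i| ^ β)
    (hM : ∀ z : ℝ, ∑' i : ℤ, |χ (z - i)| * |z - i| ^ β ≤ M)
    (hd : 0 < d) (hC : ∀ u ∈ Set.Icc (-d) d, |χ u| ≤ C)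
    (hβ : 0 ≤ β) (u : ℝ) : |χ u| ≤ max C (M / d ^ β) := by
  rcases le_or_gt |u| d with hud | hdu
  · exact (hC u (abs_le.mp hud)).trans (le_max_left _ _)
  · have hterm : |χ u| * |u| ^ β ≤ M := by
      simpa using ((hsumm u).le_tsum 0 fun i _ => by positivity).trans (hM u)
    calc |χ u| ≤ |χ u| * |u| ^ β / d ^ β := abs_le_abs_mul_rpow_div hd hdu.le hβ
      _ ≤ M / d ^ β := by gcongr
      _ ≤ _ := le_max_right _ _

/-- Every `i ≠ round z` has `|z - i| ≥ 1/2`, which lets the moment of order `β` control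
all terms but one. -/
lemma tsum_abs_le_of_forall_abs_le {M K : ℝ}
    (hsumm : ∀ z : ℝ, Summable fun i : ℤ => |χ (z - i)| * |z - i| ^ β)
    (hM : ∀ z : ℝ, ∑' i : ℤ, |χ (z - i)| * |z - i| ^ β ≤ M)
    (hK : ∀ u, |χ u| ≤ K) (hβ : 0 ≤ β) (z : ℝ) :
    ∑' i : ℤ, |χ (z - i)| ≤ K + 2 ^ β * M := by
  classical
  have hfar : ∀ i : ℤ, (if i = round z then 0 else |χ (z - i)|) ≤
      2 ^ β * (|χ (z - i)| * |z - i| ^ β) := by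
    intro i
    split_ifs with hi
    · positivity
    · have hhalf : 1 / 2 ≤ |z - i| :=
        not_lt.mp fun h => hi (round_eq_of_abs_sub_lt_half h).symm
      calc |χ (z - i)| ≤ |χ (z - i)| * |z - i| ^ β / (1 / 2) ^ β :=
            abs_le_abs_mul_rpow_div one_half_pos hhalf hβ
        _ = _ := by rw [one_div, inv_rpow zero_le_two, div_inv_eq_mul, mul_comm]
  rw [(summable_abs_of_summable_abs_mul_rpow hβ hsumm z).tsum_eq_add_tsum_ite (round z)]
  gcongr
  · exact hK _
  · calc _ ≤ ∑' i : ℤ, 2 ^ β * (|χ (z - i)| * |z - i| ^ β) :=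
          ((summable_abs_of_summable_abs_mul_rpow hβ hsumm z).of_nonneg_of_le
            (fun i => by split_ifs <;> positivity) fun i => by
              split_ifs <;> simp).tsum_le_tsum hfar ((hsumm z).mul_left _)
      _ ≤ 2 ^ β * M := by rw [tsum_mul_left]; gcongr; exact hM z

lemma tsum_abs_le_mom0 {M d C : ℝ}
    (hsumm : ∀ z : ℝ, Summable fun i : ℤ => |χ (z - i)| * |z - i| ^ β)
    (hM : ∀ z : ℝ, ∑' i : ℤ, |χ (z - i)| * |z - i| ^ β ≤ M)
    (hd : 0 < d) (hC : ∀ u ∈ Set.Icc (-d) d, |χ u| ≤ C)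
    (hβ : 0 ≤ β) (z : ℝ) : ∑' i : ℤ, |χ (z - i)| ≤ mom0 χ :=
  le_ciSup (f := fun z : ℝ => ∑' i : ℤ, |χ (z - i)|)
    ⟨_, Set.forall_mem_range.mpr
      (tsum_abs_le_of_forall_abs_le hsumm hM (abs_le_max_of_abs_le_on_Icc hsumm hM hd hC hβ) hβ)⟩ z

end Kernel

lemma abs_tsum_mul_sub_le {a v m : ℤ → ℝ} {c ε K : ℝ} (ha : ∑' i, a i = 1)
    (habs : Summable fun i => |a i|) (hm : Summable fun i => |a i| * m i)
    (hv : ∀ i, |v i - c| ≤ ε + K * m i) :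
    |∑' i, a i * v i - c| ≤ ε * ∑' i, |a i| + K * ∑' i, |a i| * m i := by
  have hmaj : Summable fun i => ε * |a i| + K * (|a i| * m i) :=
    (habs.mul_left ε).add (hm.mul_left K)
  have hpt : ∀ i, |a i * (v i - c)| ≤ ε * |a i| + K * (|a i| * m i) := fun i => by
    rw [abs_mul]
    calc |a i| * |v i - c| ≤ |a i| * (ε + K * m i) :=
          mul_le_mul_of_nonneg_left (hv i) (abs_nonneg _)
      _ = _ := by ring
  have hdiff : Summable fun i => a i * (v i - c) := hmaj.of_norm_bounded hpt
  have hac : Summable fun i => a i * c := habs.of_abs.mul_right c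
  have hav : Summable fun i => a i * v i := (hdiff.add hac).congr fun i => by ring
  have hsplit : ∑' i, a i * v i - c = ∑' i, a i * (v i - c) := by
    simp_rw [mul_sub]
    rw [hav.tsum_sub hac, tsum_mul_right, ha, one_mul]
  calc |∑' i, a i * v i - c| = |∑' i, a i * (v i - c)| := by rw [hsplit]
    _ ≤ ∑' i, |a i * (v i - c)| := by
      simpa only [Real.norm_eq_abs] using norm_tsum_le_tsum_norm hdiff.norm
    _ ≤ ∑' i, (ε * |a i| + K * (|a i| * m i)) := hdiff.abs.tsum_le_tsum hpt hmaj
    _ = _ := by rw [(habs.mul_left ε).tsum_add (hm.mul_left K), tsum_mul_left, tsum_mul_left]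

lemma le_add_div_rpow_mul_of_le {x u R ε D β : ℝ} (hR : 0 < R) (hβ : 0 ≤ β) (hε : 0 ≤ ε)
    (hD : 0 ≤ D) (hnear : |u| < R → x ≤ ε) (hfar : x ≤ D) : x ≤ ε + D / R ^ β * |u| ^ β := by
  rcases lt_or_ge |u| R with hu | hu
  · have : 0 ≤ D / R ^ β * |u| ^ β := by positivity
    linarith [hnear hu]
  · calc x ≤ D := hfar
      _ ≤ D / R ^ β * |u| ^ β := by
        rw [div_mul_eq_mul_div, le_div_iff₀ (rpow_pos_of_pos hR β)]
        exact mul_le_mul_of_nonneg_left (rpow_le_rpow hR.le hu hβ) hD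
      _ ≤ ε + D / R ^ β * |u| ^ β := le_add_of_nonneg_left hε

lemma abs_intervalIntegral_sub_le {F : ℝ → ℝ} {c ε : ℝ} (hF : IntervalIntegrable F volume 0 1)
    (h : ∀ t ∈ Set.Ioc (0 : ℝ) 1, |F t - c| ≤ ε) : |(∫ t in (0 : ℝ)..1, F t) - c| ≤ ε := by
  have := intervalIntegral.norm_integral_le_of_norm_le_const (a := 0) (b := 1)
    (f := fun t => F t - c) (C := ε) (by simpa [Set.uIoc_of_le zero_le_one] using h)
  simpa [intervalIntegral.integral_sub hF intervalIntegrable_const] using this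

lemma abs_add_div_sub_lt {w y δ s R : ℝ} {i : ℤ} (hw : 0 < w + 1) (hs₀ : 0 ≤ s) (hs₁ : s ≤ 1)
    (hi : |w * y - i| < R) (hR : R + (1 + |y|) ≤ δ * (w + 1)) :
    |(i + s) / (w + 1) - y| < δ := by
  rw [div_sub' hw.ne', abs_div, abs_of_pos hw, div_lt_iff₀ hw, abs_lt]
  have := abs_lt.mp hi
  constructor <;> linarith [le_abs_self y, neg_abs_le y]

lemma abs_intervalIntegral_comp_sub_le {g : ℝ → ℝ} {B α w y δ ε R β : ℝ} (hg : Measurable g)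
    (hB : ∀ u, |g u| ≤ B) (hα : 0 ≤ α) (hgδ : ∀ u, |u - y| < δ → |g u - g y| ≤ ε)
    (hε : 0 ≤ ε) (hw : 0 < w + 1) (hR : 0 < R) (hRδ : R + (1 + |y|) ≤ δ * (w + 1))
    (hβ : 0 ≤ β) (i : ℤ) :
    |(∫ t in (0 : ℝ)..1, g ((i + t ^ α) / (w + 1))) - g y|
      ≤ ε + 2 * B / R ^ β * |w * y - i| ^ β := by
  have hint : IntervalIntegrable (fun t => g ((i + t ^ α) / (w + 1))) volume 0 1 :=
    (intervalIntegrable_const (c := B)).mono_fun'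
      (hg.comp ((measurable_const.add (measurable_id.pow_const α)).div_const _)
        |>.aestronglyMeasurable)
      (ae_of_all _ fun t => by simpa using hB _)
  refine le_add_div_rpow_mul_of_le hR hβ hε (by linarith [(abs_nonneg _).trans (hB y)])
    (fun hnear => abs_intervalIntegral_sub_le hint fun t ht => hgδ _ ?_)
    (abs_intervalIntegral_sub_le hint fun t _ =>
      (abs_sub _ _).trans (by linarith [hB y, hB ((i + t ^ α) / (w + 1))]))
  exact abs_add_div_sub_lt hw (rpow_nonneg ht.1.le α) (rpow_le_one ht.1.le ht.2 hα) hnear hRδ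

lemma abs_T_sub_le {χ g : ℝ → ℝ} {α β w y B δ ε R M₀ M : ℝ}
    (hχsum : ∀ z : ℝ, ∑' i : ℤ, χ (z - i) = 1) (hβ : 0 ≤ β)
    (hsumm : ∀ z : ℝ, Summable fun i : ℤ => |χ (z - i)| * |z - i| ^ β)
    (hM₀ : ∀ z : ℝ, ∑' i : ℤ, |χ (z - i)| ≤ M₀)
    (hM : ∀ z : ℝ, ∑' i : ℤ, |χ (z - i)| * |z - i| ^ β ≤ M)
    (hg : Measurable g) (hB : ∀ u, |g u| ≤ B) (hα : 0 ≤ α)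
    (hgδ : ∀ u, |u - y| < δ → |g u - g y| ≤ ε) (hε : 0 ≤ ε)
    (hw : 0 < w + 1) (hR : 0 < R) (hRδ : R + (1 + |y|) ≤ δ * (w + 1)) :
    |T χ α w g y - g y| ≤ ε * M₀ + 2 * B / R ^ β * M := by
  calc |T χ α w g y - g y|
      ≤ ε * ∑' i : ℤ, |χ (w * y - i)|
          + 2 * B / R ^ β * ∑' i : ℤ, |χ (w * y - i)| * |w * y - i| ^ β :=
        abs_tsum_mul_sub_le (hχsum _) (summable_abs_of_summable_abs_mul_rpow hβ hsumm _)
          (hsumm _) (abs_intervalIntegral_comp_sub_le hg hB hα hgδ hε hw hR hRδ hβ)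
    _ ≤ ε * M₀ + 2 * B / R ^ β * M := by
      have hB₀ : 0 ≤ B := (abs_nonneg _).trans (hB y)
      gcongr
      exacts [hM₀ _, hM _]

theorem stmt4_general (χ : ℝ → ℝ)
    (hχbd : ∃ d : ℝ, 0 < d ∧ ∃ C : ℝ, ∀ z ∈ Set.Icc (-d) d, |χ z| ≤ C)
    (hχsum : ∀ z : ℝ, ∑' i : ℤ, χ (z - ↑i) = 1)
    (β : ℝ) (hβ : 0 < β)
    (hβsumm : ∀ z : ℝ, Summable fun i : ℤ => |χ (z - ↑i)| * |z - ↑i| ^ β)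
    (hβbdd : BddAbove (Set.range fun z : ℝ => ∑' i : ℤ, |χ (z - ↑i)| * |z - ↑i| ^ β))
    (α : ℝ) (hα : 0 < α)
    (g : ℝ → ℝ) (hgMeas : Measurable g) (hgBdd : ∃ B : ℝ, ∀ u : ℝ, |g u| ≤ B)
    (y : ℝ) (hgCont : ContinuousAt g y) :
    Tendsto (fun w : ℝ => T χ α w g y) atTop (nhds (g y)) := by
  obtain ⟨d, hd, C, hC⟩ := hχbd
  obtain ⟨B, hB⟩ := hgBdd
  set M := ⨆ z : ℝ, ∑' i : ℤ, |χ (z - ↑i)| * |z - ↑i| ^ β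
  have hM : ∀ z : ℝ, ∑' i : ℤ, |χ (z - ↑i)| * |z - ↑i| ^ β ≤ M := le_ciSup hβbdd
  have hM₀ := tsum_abs_le_mom0 hβsumm hM hd hC hβ.le
  have hM₀_nonneg : 0 ≤ mom0 χ := (tsum_nonneg fun _ => abs_nonneg _).trans (hM₀ 0)
  rw [Metric.tendsto_nhds]
  intro ε hε
  set ε' := ε / (2 * (mom0 χ + 1))
  have hε' : ε' * mom0 χ < ε / 2 := by
    rw [div_mul_eq_mul_div, div_lt_iff₀ (by positivity)]
    nlinarith
  obtain ⟨δ, hδ, hgδ⟩ := Metric.continuousAt_iff.mp hgCont ε' (by positivity)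
  have hR : Tendsto (fun w : ℝ => δ * (w + 1) - (1 + |y|)) atTop atTop :=
    tendsto_atTop_add_const_right _ _
      ((tendsto_atTop_add_const_right _ 1 tendsto_id).const_mul_atTop hδ)
  have herr :
      Tendsto (fun w : ℝ => 2 * B / (δ * (w + 1) - (1 + |y|)) ^ β * M) atTop (nhds 0) := by
    simpa using (tendsto_const_nhds.div_atTop ((tendsto_rpow_atTop hβ).comp hR)).mul_const M
  filter_upwards [eventually_gt_atTop (-1), hR.eventually_gt_atTop 0,
    herr.eventually_lt_const (half_pos hε)] with w hw hRw herrw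
  rw [Real.dist_eq]
  calc |T χ α w g y - g y| ≤ ε' * mom0 χ + 2 * B / (δ * (w + 1) - (1 + |y|)) ^ β * M :=
        abs_T_sub_le hχsum hβ.le hβsumm hM₀ hM hgMeas hB hα.le
          (fun u hu => (hgδ (by rwa [Real.dist_eq])).le) (by positivity) (by linarith) hRw
          (by linarith)
    _ < ε := by linarith

theorem stmt4 (χ : ℝ → ℝ)
    (hχInt : Integrable χ)
    (hχbd : ∃ d : ℝ, 0 < d ∧ ∃ C : ℝ, ∀ z ∈ Set.Icc (-d) d, |χ z| ≤ C)
    (hχsum : ∀ z : ℝ, ∑' i : ℤ, χ (z - ↑i) = 1)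
    (β : ℝ) (hβ : 0 < β)
    (hβsumm : ∀ z : ℝ, Summable fun i : ℤ => |χ (z - ↑i)| * |z - ↑i| ^ β)
    (hβbdd : BddAbove (Set.range fun z : ℝ => ∑' i : ℤ, |χ (z - ↑i)| * |z - ↑i| ^ β))
    (α : ℝ) (hα : 0 < α)
    (g : ℝ → ℝ) (hgMeas : Measurable g) (hgBdd : ∃ B : ℝ, ∀ u : ℝ, |g u| ≤ B)
    (y : ℝ) (hgCont : ContinuousAt g y) :
    Tendsto (fun w : ℝ => T χ α w g y) atTop (nhds (g y)) :=
  stmt4_general χ hχbd hχsum β hβ hβsumm hβbdd α hα g hgMeas hgBdd y hgCont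
end

section
/- Let χ : ℝ → ℝ be a kernel: χ ∈ L¹(ℝ), χ is bounded on a neighborhood of 0, ∑_{i∈ℤ} χ(z − i) = 1 for every z ∈ ℝ, and there exists β > 0 with m_β(χ) := sup_{z∈ℝ} ∑_{i∈ℤ} |χ(z − i)| · |z − i|^β < ∞. Fix α > 0. Let η : [0,∞) → [0,∞) be convex, non-decreasing, with η(0) = 0 and η(x) > 0 for x > 0. Then for every continuous function g : ℝ → ℝ with compact support and every λ > 0, lim_{w→∞} ∫_ℝ η(λ |(T_w g)(y) − g(y)|) dy = 0. -/
open Real Filter MeasureTheory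

/-!
On a compact interval `T_w g → g` uniformly: the sample `∫₀¹ g((i + t^α)/(w+1)) dt` is close to
`g y` by uniform continuity as long as `|wy - i| ≤ c`, and the weights `χ(wy - i)` with
`|wy - i| > c` have total mass at most `m_β(χ) / c^β`; taking `c` proportional to `w` makes both
errors small. If `supp g ⊆ [-M, M]` and `|y| > 3M`, only the indices `|i| ≲ M w` contribute to
`T_w g y`, and for them `|wy - i| ≥ M w`; after the substitution `v = wy - i` their contribution
to `∫ |T_w g|` is a bounded multiple of `∫_{|v| ≥ Mw} |χ|`, which tends to `0`. Hence
`T_w g → g` in `L¹`. Finally `|T_w g - g|` is bounded uniformly in `w`, and a convex `η` with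
`η 0 = 0` satisfies `η x ≤ (η B / B) x` on `[0, B]`, so the modular is dominated by a multiple
of the `L¹` distance.
-/

open scoped Topology ENNReal

section IntegerCount

variable {f : ℤ → ℝ} {a b : ℝ}

theorem eq_zero_of_notMem_Icc_ceil_floor (hf : ∀ i : ℤ, (i : ℝ) ∉ Set.Icc a b → f i = 0) :
    ∀ i ∉ Finset.Icc ⌈a⌉ ⌊b⌋, f i = 0 := fun i hi ↦ hf i fun ⟨hai, hib⟩ ↦
  hi (Finset.mem_Icc.2 ⟨Int.ceil_le.2 hai, Int.le_floor.2 hib⟩)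

theorem summable_of_eq_zero_of_notMem_Icc (hf : ∀ i : ℤ, (i : ℝ) ∉ Set.Icc a b → f i = 0) :
    Summable f :=
  summable_of_ne_finset_zero (eq_zero_of_notMem_Icc_ceil_floor hf)

theorem tsum_le_of_eq_zero_of_notMem_Icc {C : ℝ} (hab : a ≤ b) (hC : 0 ≤ C)
    (hfC : ∀ i, f i ≤ C) (hf : ∀ i : ℤ, (i : ℝ) ∉ Set.Icc a b → f i = 0) :
    ∑' i, f i ≤ C * (b - a + 1) := by
  rw [tsum_eq_sum (eq_zero_of_notMem_Icc_ceil_floor hf)]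
  have hcard : ((Finset.Icc ⌈a⌉ ⌊b⌋).card : ℝ) ≤ b - a + 1 := by
    rw [Int.card_Icc]
    rcases le_total (⌊b⌋ + 1 - ⌈a⌉) 0 with h | h
    · rw [Int.toNat_of_nonpos h]; push_cast; linarith
    · rw [← Int.cast_natCast, Int.toNat_of_nonneg h]
      push_cast
      linarith [Int.floor_le b, Int.le_ceil a]
  calc ∑ i ∈ Finset.Icc ⌈a⌉ ⌊b⌋, f i ≤ (Finset.Icc ⌈a⌉ ⌊b⌋).card • C :=
        Finset.sum_le_card_nsmul _ _ _ fun i _ ↦ hfC i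
    _ ≤ C * (b - a + 1) := by
        rw [nsmul_eq_mul, mul_comm]; exact mul_le_mul_of_nonneg_left hcard hC

end IntegerCount

theorem lintegral_comp_mul_sub {w : ℝ} (hw : 0 < w) (c : ℝ) (F : ℝ → ℝ≥0∞) :
    ∫⁻ y, F (w * y - c) = ENNReal.ofReal w⁻¹ * ∫⁻ v, F v := by
  have hmap := (Homeomorph.mulLeft₀ w hw.ne').measurableEmbedding.lintegral_map (μ := volume)
    (fun v ↦ F (v - c))
  simp only [Homeomorph.coe_mulLeft₀] at hmap
  rw [← hmap, Real.map_volume_mul_left hw.ne', lintegral_smul_measure,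
    lintegral_sub_right_eq_self, abs_inv, abs_of_pos hw, smul_eq_mul]

theorem MeasureTheory.Integrable.tendsto_setLIntegral_abs_ge {E : Type*} [NormedAddCommGroup E]
    {f : ℝ → E} (hf : Integrable f) :
    Tendsto (fun R ↦ ∫⁻ v in {v | R ≤ |v|}, ‖f v‖ₑ) atTop (𝓝 0) := by
  have hmeas : ∀ R : ℝ, MeasurableSet {v : ℝ | R ≤ |v|} :=
    fun R ↦ measurableSet_le measurable_const continuous_abs.measurable
  have : IsFiniteMeasure (volume.withDensity fun v ↦ ‖f v‖ₑ) :=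
    isFiniteMeasure_withDensity hf.2.ne
  have hlim := tendsto_measure_iInter_atTop (μ := volume.withDensity fun v ↦ ‖f v‖ₑ)
    (fun R ↦ (hmeas R).nullMeasurableSet)
    (fun R R' h v (hv : R' ≤ |v|) ↦ h.trans hv) ⟨0, measure_ne_top _ _⟩
  have hempty : (⋂ R : ℝ, {v : ℝ | R ≤ |v|}) = ∅ :=
    Set.eq_empty_of_forall_notMem fun v hv ↦
      (lt_add_one |v|).not_ge (Set.mem_iInter.1 hv (|v| + 1))
  rw [hempty, measure_empty] at hlim
  simpa only [Function.comp_def, withDensity_apply _ (hmeas _)] using hlim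

theorem TendstoUniformlyOn.tendsto_setLIntegral_ofReal_abs_sub {ι X : Type*} [MeasurableSpace X]
    {μ : Measure X} {p : Filter ι} {F : ι → X → ℝ} {f : X → ℝ} {s : Set X}
    (h : TendstoUniformlyOn F f p s) (hs : MeasurableSet s) (hμs : μ s ≠ ⊤) :
    Tendsto (fun n ↦ ∫⁻ x in s, ENNReal.ofReal |F n x - f x| ∂μ) p (𝓝 0) := by
  rw [ENNReal.tendsto_nhds_zero]
  intro ε hε
  obtain ⟨δ, -, hδ0, hδε⟩ := ENNReal.lt_iff_exists_real_btwn.1 (ENNReal.div_pos hε.ne' hμs)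
  filter_upwards [Metric.tendstoUniformlyOn_iff.1 h δ (ENNReal.ofReal_pos.1 hδ0)] with n hn
  calc ∫⁻ x in s, ENNReal.ofReal |F n x - f x| ∂μ ≤ ∫⁻ _ in s, ENNReal.ofReal δ ∂μ :=
        setLIntegral_mono' hs fun x hx ↦ ENNReal.ofReal_le_ofReal <| by
          rw [← Real.dist_eq, dist_comm]; exact (hn x hx).le
    _ = ENNReal.ofReal δ * μ s := setLIntegral_const _ _
    _ ≤ ε := ENNReal.mul_le_of_le_div hδε.le

theorem ConvexOn.le_div_mul_of_map_zero {η : ℝ → ℝ} (hconv : ConvexOn ℝ (Set.Ici 0) η)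
    (hη0 : η 0 = 0) {x X : ℝ} (hx : 0 ≤ x) (hxX : x ≤ X) (hX : 0 < X) : η x ≤ x / X * η X := by
  have h := hconv.2 (Set.mem_Ici.2 le_rfl) (Set.mem_Ici.2 hX.le)
    (sub_nonneg.2 ((div_le_one hX).2 hxX)) (div_nonneg hx hX.le) (sub_add_cancel 1 (x / X))
  rwa [smul_zero, zero_add, smul_eq_mul, div_mul_cancel₀ x hX.ne', smul_eq_mul, hη0, mul_zero,
    zero_add] at h

theorem tendsto_lintegral_ofReal_comp_of_tendsto {ι X : Type*} [MeasurableSpace X]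
    {μ : Measure X} {p : Filter ι} {η : ℝ → ℝ} (hconv : ConvexOn ℝ (Set.Ici 0) η) (hη0 : η 0 = 0)
    {F : ι → X → ℝ} {B : ℝ} (hF0 : ∀ n x, 0 ≤ F n x) (hFB : ∀ n x, F n x ≤ B)
    (h : Tendsto (fun n ↦ ∫⁻ x, ENNReal.ofReal (F n x) ∂μ) p (𝓝 0)) :
    Tendsto (fun n ↦ ∫⁻ x, ENNReal.ofReal (η (F n x)) ∂μ) p (𝓝 0) := by
  set X₀ := max B 1
  have hX₀ : 0 < X₀ := lt_max_of_lt_right one_pos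
  have hpt : ∀ n x,
      ENNReal.ofReal (η (F n x)) ≤ ENNReal.ofReal (η X₀ / X₀) * ENNReal.ofReal (F n x) :=
    fun n x ↦ by
      rw [← ENNReal.ofReal_mul' (hF0 n x)]
      refine ENNReal.ofReal_le_ofReal ((hconv.le_div_mul_of_map_zero hη0 (hF0 n x)
        ((hFB n x).trans (le_max_left _ _)) hX₀).trans_eq (by ring))
  have hlim := ENNReal.Tendsto.const_mul h (Or.inr (ENNReal.ofReal_ne_top (r := η X₀ / X₀)))
  rw [mul_zero] at hlim
  exact tendsto_of_tendsto_of_tendsto_of_le_of_le tendsto_const_nhds hlim (fun _ ↦ zero_le)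
    fun n ↦ (lintegral_mono (hpt n)).trans_eq (lintegral_const_mul' _ _ ENNReal.ofReal_ne_top)

theorem summable_abs_mul_abs {f a : ℤ → ℝ} {D : ℝ} (hf : Summable fun i ↦ |f i|)
    (ha : ∀ i, |a i| ≤ D) : Summable fun i ↦ |f i| * |a i| :=
  .of_nonneg_of_le (fun _ ↦ by positivity)
    (fun i ↦ mul_le_mul_of_nonneg_left (ha i) (abs_nonneg _)) (hf.mul_right D)

theorem abs_tsum_mul_le_tsum {f a : ℤ → ℝ} {D : ℝ} (hf : Summable fun i ↦ |f i|)
    (ha : ∀ i, |a i| ≤ D) : |∑' i, f i * a i| ≤ ∑' i, |f i| * |a i| := by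
  have hs : Summable fun i ↦ ‖f i * a i‖ := by
    simpa only [Real.norm_eq_abs, abs_mul] using summable_abs_mul_abs hf ha
  simpa only [Real.norm_eq_abs, abs_mul] using norm_tsum_le_tsum_norm hs

section Kernel

variable {χ : ℝ → ℝ} {d C β : ℝ}

theorem abs_le_ite_add_moment (hd : 0 < d) (hC : ∀ z ∈ Set.Icc (-d) d, |χ z| ≤ C)
    (hβ : 0 < β) (u : ℝ) :
    |χ u| ≤ (if |u| ≤ d then C else 0) + |χ u| * |u| ^ β / d ^ β := by
  split_ifs with h
  · have : 0 ≤ |χ u| * |u| ^ β / d ^ β := by positivity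
    linarith [hC u (abs_le.1 h)]
  · have hdu : d ^ β ≤ |u| ^ β := rpow_le_rpow hd.le (not_le.1 h).le hβ.le
    rw [zero_add, mul_div_assoc]
    exact le_mul_of_one_le_right (abs_nonneg _) ((one_le_div (by positivity)).2 hdu)

theorem ite_abs_sub_le_eq_zero (z : ℝ) (i : ℤ) (hi : (i : ℝ) ∉ Set.Icc (z - d) (z + d)) :
    (if |z - i| ≤ d then C else 0) = 0 :=
  if_neg fun h ↦ hi ⟨by linarith [(abs_le.1 h).2], by linarith [(abs_le.1 h).1]⟩

theorem summable_abs_kernel (hd : 0 < d) (hC : ∀ z ∈ Set.Icc (-d) d, |χ z| ≤ C)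
    (hβ : 0 < β) {z : ℝ} (hβsumm : Summable fun i : ℤ ↦ |χ (z - i)| * |z - i| ^ β) :
    Summable fun i : ℤ ↦ |χ (z - i)| :=
  .of_nonneg_of_le (fun _ ↦ abs_nonneg _) (fun _ ↦ abs_le_ite_add_moment hd hC hβ _)
    ((summable_of_eq_zero_of_notMem_Icc (ite_abs_sub_le_eq_zero z)).add (hβsumm.div_const _))

theorem tsum_abs_kernel_le (hd : 0 < d) (hC : ∀ z ∈ Set.Icc (-d) d, |χ z| ≤ C)
    (hβ : 0 < β) {z mb : ℝ} (hβsumm : Summable fun i : ℤ ↦ |χ (z - i)| * |z - i| ^ β)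
    (hmb : ∑' i : ℤ, |χ (z - i)| * |z - i| ^ β ≤ mb) :
    ∑' i : ℤ, |χ (z - i)| ≤ C * (2 * d + 1) + mb / d ^ β := by
  have hnear := summable_of_eq_zero_of_notMem_Icc (ite_abs_sub_le_eq_zero (d := d) (C := C) z)
  have hC0 : 0 ≤ C := (abs_nonneg _).trans (hC 0 ⟨by linarith, hd.le⟩)
  calc ∑' i : ℤ, |χ (z - i)|
      ≤ ∑' i : ℤ, ((if |z - i| ≤ d then C else 0) + |χ (z - i)| * |z - i| ^ β / d ^ β) :=
        (summable_abs_kernel hd hC hβ hβsumm).tsum_le_tsum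
          (fun i ↦ abs_le_ite_add_moment hd hC hβ _) (hnear.add (hβsumm.div_const _))
    _ = ∑' i : ℤ, (if |z - i| ≤ d then C else 0)
          + (∑' i : ℤ, |χ (z - i)| * |z - i| ^ β) / d ^ β := by
        rw [hnear.tsum_add (hβsumm.div_const _), tsum_div_const]
    _ ≤ C * (z + d - (z - d) + 1) + mb / d ^ β := by
        gcongr
        exact tsum_le_of_eq_zero_of_notMem_Icc (by linarith) hC0
          (fun i ↦ by split_ifs <;> linarith) (ite_abs_sub_le_eq_zero z)
    _ = C * (2 * d + 1) + mb / d ^ β := by ring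

end Kernel

theorem abs_tsum_kernel_mul_sub_le {χ : ℝ → ℝ} {β z K mb b c ε D : ℝ} {a : ℤ → ℝ}
    (hβ : 0 < β) (hχsum : ∑' i : ℤ, χ (z - i) = 1) (hsum : Summable fun i : ℤ ↦ |χ (z - i)|)
    (hK : ∑' i : ℤ, |χ (z - i)| ≤ K)
    (hβsumm : Summable fun i : ℤ ↦ |χ (z - i)| * |z - i| ^ β)
    (hmb : ∑' i : ℤ, |χ (z - i)| * |z - i| ^ β ≤ mb) (hc : 0 < c) (hε : 0 ≤ ε)
    (hnear : ∀ i : ℤ, |z - i| ≤ c → |a i - b| ≤ ε) (hfar : ∀ i, |a i - b| ≤ D) :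
    |∑' i : ℤ, χ (z - i) * a i - b| ≤ ε * K + D * mb / c ^ β := by
  have hD : 0 ≤ D := (abs_nonneg _).trans (hfar 0)
  have hcβ : 0 < c ^ β := rpow_pos_of_pos hc β
  have hsa : Summable fun i : ℤ ↦ χ (z - i) * a i := by
    refine .of_abs ?_
    simpa only [abs_mul] using summable_abs_mul_abs hsum (D := D + |b|)
      fun i ↦ by linarith [abs_sub_abs_le_abs_sub (a i) b, hfar i]
  have hterm : ∀ i : ℤ, |χ (z - i)| * |a i - b|
      ≤ ε * |χ (z - i)| + D / c ^ β * (|χ (z - i)| * |z - i| ^ β) := by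
    intro i
    by_cases hi : |z - i| ≤ c
    · have : 0 ≤ D / c ^ β * (|χ (z - i)| * |z - i| ^ β) := by positivity
      nlinarith [mul_le_mul_of_nonneg_left (hnear i hi) (abs_nonneg (χ (z - i)))]
    · have hcu : c ^ β ≤ |z - i| ^ β := rpow_le_rpow hc.le (not_le.1 hi).le hβ.le
      have hfar' : |χ (z - i)| * |a i - b| ≤ D / c ^ β * (|χ (z - i)| * |z - i| ^ β) := by
        rw [div_mul_eq_mul_div, le_div_iff₀ hcβ]
        calc |χ (z - i)| * |a i - b| * c ^ β ≤ |χ (z - i)| * D * |z - i| ^ β := by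
              gcongr
              exact hfar i
          _ = D * (|χ (z - i)| * |z - i| ^ β) := by ring
      nlinarith [abs_nonneg (χ (z - i))]
  have hs := summable_abs_mul_abs hsum (a := fun i ↦ a i - b) hfar
  calc |∑' i : ℤ, χ (z - i) * a i - b| = |∑' i : ℤ, χ (z - i) * (a i - b)| := by
        simp_rw [mul_sub]
        rw [hsa.tsum_sub (hsum.of_abs.mul_right b), tsum_mul_right, hχsum, one_mul]
    _ ≤ ∑' i : ℤ, |χ (z - i)| * |a i - b| := abs_tsum_mul_le_tsum hsum (a := fun i ↦ a i - b) hfar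
    _ ≤ ∑' i : ℤ, (ε * |χ (z - i)| + D / c ^ β * (|χ (z - i)| * |z - i| ^ β)) :=
        hs.tsum_le_tsum hterm ((hsum.mul_left ε).add (hβsumm.mul_left _))
    _ = ε * ∑' i : ℤ, |χ (z - i)| + D / c ^ β * ∑' i : ℤ, |χ (z - i)| * |z - i| ^ β := by
        rw [(hsum.mul_left ε).tsum_add (hβsumm.mul_left _), tsum_mul_left, tsum_mul_left]
    _ ≤ ε * K + D / c ^ β * mb := by gcongr
    _ = ε * K + D * mb / c ^ β := by ring

noncomputable def kantorovichMean (α w : ℝ) (g : ℝ → ℝ) (i : ℤ) : ℝ :=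
  ∫ t in (0:ℝ)..1, g ((i + t ^ α) / (w + 1))

theorem T_eq_tsum_kantorovichMean (χ : ℝ → ℝ) (α w : ℝ) (g : ℝ → ℝ) (y : ℝ) :
    T χ α w g y = ∑' i : ℤ, χ (w * y - i) * kantorovichMean α w g i := rfl

section KantorovichMean

variable {α w : ℝ} {g : ℝ → ℝ}

theorem abs_kantorovichMean_sub_le (hα : 0 ≤ α) (hg : Continuous g) {b ε : ℝ} {i : ℤ}
    (h : ∀ s ∈ Set.Icc (0:ℝ) 1, |g ((i + s) / (w + 1)) - b| ≤ ε) :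
    |kantorovichMean α w g i - b| ≤ ε := by
  have hint : IntervalIntegrable (fun t ↦ g ((i + t ^ α) / (w + 1))) volume 0 1 :=
    (hg.comp ((continuous_const.add (continuous_rpow_const hα)).div_const _)).intervalIntegrable
      _ _
  have hsub :
      kantorovichMean α w g i - b = ∫ t in (0:ℝ)..1, (g ((i + t ^ α) / (w + 1)) - b) := by
    rw [intervalIntegral.integral_sub hint intervalIntegrable_const,
      intervalIntegral.integral_const]
    simp only [kantorovichMean, sub_zero, one_smul]
  rw [hsub, ← Real.norm_eq_abs]
  refine (intervalIntegral.norm_integral_le_of_norm_le_const (C := ε) fun t ht ↦ ?_).trans_eq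
    (by simp)
  rw [Set.uIoc_of_le zero_le_one] at ht
  exact h _ ⟨rpow_nonneg ht.1.le α, rpow_le_one ht.1.le ht.2 hα⟩

theorem abs_kantorovichMean_le (hα : 0 ≤ α) (hg : Continuous g) {G : ℝ} (hG : ∀ x, |g x| ≤ G)
    (i : ℤ) : |kantorovichMean α w g i| ≤ G := by
  simpa using abs_kantorovichMean_sub_le (w := w) (i := i) hα hg (b := 0) fun s _ ↦ by
    simpa using hG _

theorem kantorovichMean_eq_zero (hα : 0 ≤ α) (hg : Continuous g) {M : ℝ} (hw : 0 < w + 1)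
    (hgM : ∀ x, M < |x| → g x = 0) {i : ℤ}
    (hi : (i : ℝ) ∉ Set.Icc (-(M * (w + 1) + 1)) (M * (w + 1) + 1)) :
    kantorovichMean α w g i = 0 := by
  have hvanish : ∀ s ∈ Set.Icc (0:ℝ) 1, |g ((i + s) / (w + 1)) - 0| ≤ 0 := by
    intro s hs
    rw [hgM _ ?_, sub_zero, abs_zero]
    rw [abs_div, abs_of_pos hw, lt_div_iff₀ hw, lt_abs]
    rw [Set.mem_Icc, not_and_or, not_le, not_le] at hi
    rcases hi with hi | hi
    · right; linarith [hs.2]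
    · left; linarith [hs.1]
  simpa using abs_kantorovichMean_sub_le hα hg hvanish

theorem tsum_ofReal_abs_kantorovichMean_le (hα : 0 ≤ α) (hg : Continuous g) {G M : ℝ}
    (hG : ∀ x, |g x| ≤ G) (hM : 0 ≤ M) (hw : 0 < w + 1) (hgM : ∀ x, M < |x| → g x = 0) :
    ∑' i : ℤ, ENNReal.ofReal |kantorovichMean α w g i|
      ≤ ENNReal.ofReal (G * (2 * (M * (w + 1) + 1) + 1)) := by
  have hvanish : ∀ i : ℤ, (i : ℝ) ∉ Set.Icc (-(M * (w + 1) + 1)) (M * (w + 1) + 1) →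
      |kantorovichMean α w g i| = 0 :=
    fun i hi ↦ abs_eq_zero.2 (kantorovichMean_eq_zero hα hg hw hgM hi)
  rw [← ENNReal.ofReal_tsum_of_nonneg (fun _ ↦ abs_nonneg _)
    (summable_of_eq_zero_of_notMem_Icc hvanish)]
  refine ENNReal.ofReal_le_ofReal ((tsum_le_of_eq_zero_of_notMem_Icc (by nlinarith)
    ((abs_nonneg _).trans (hG 0)) (abs_kantorovichMean_le hα hg hG) hvanish).trans_eq (by ring))

end KantorovichMean

theorem abs_T_le {χ : ℝ → ℝ} {K : ℝ} (hsum : ∀ z : ℝ, Summable fun i : ℤ ↦ |χ (z - i)|)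
    (hK : ∀ z : ℝ, ∑' i : ℤ, |χ (z - i)| ≤ K) {α : ℝ} (hα : 0 ≤ α) {g : ℝ → ℝ}
    (hg : Continuous g) {G : ℝ} (hG : ∀ x, |g x| ≤ G) (w y : ℝ) :
    |T χ α w g y| ≤ G * K := by
  have hm := abs_kantorovichMean_le (w := w) hα hg hG
  calc |T χ α w g y| ≤ ∑' i : ℤ, |χ (w * y - i)| * |kantorovichMean α w g i| :=
        abs_tsum_mul_le_tsum (hsum _) hm
    _ ≤ ∑' i : ℤ, |χ (w * y - i)| * G := (summable_abs_mul_abs (hsum _) hm).tsum_le_tsum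
        (fun i ↦ mul_le_mul_of_nonneg_left (abs_kantorovichMean_le hα hg hG i) (abs_nonneg _))
        ((hsum _).mul_right G)
    _ ≤ G * K := by
        rw [tsum_mul_right, mul_comm]
        exact mul_le_mul_of_nonneg_left (hK _) ((abs_nonneg _).trans (hG 0))

theorem ofReal_abs_T_le_tsum {χ : ℝ → ℝ} (hsum : ∀ z : ℝ, Summable fun i : ℤ ↦ |χ (z - i)|)
    {α : ℝ} (hα : 0 ≤ α) {g : ℝ → ℝ} (hg : Continuous g) {G : ℝ} (hG : ∀ x, |g x| ≤ G)
    (w y : ℝ) : ENNReal.ofReal |T χ α w g y|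
      ≤ ∑' i : ℤ, ENNReal.ofReal |kantorovichMean α w g i| * ‖χ (w * y - i)‖ₑ := by
  have hm := abs_kantorovichMean_le (w := w) hα hg hG
  rw [T_eq_tsum_kantorovichMean]
  refine (ENNReal.ofReal_le_ofReal (abs_tsum_mul_le_tsum (hsum (w * y)) hm)).trans_eq ?_
  rw [ENNReal.ofReal_tsum_of_nonneg (fun _ ↦ by positivity) (summable_abs_mul_abs (hsum _) hm)]
  congr 1 with i
  rw [ENNReal.ofReal_mul (abs_nonneg _), Real.enorm_eq_ofReal_abs, mul_comm]

theorem tendstoUniformlyOn_T {χ : ℝ → ℝ} {β K mb : ℝ} (hβ : 0 < β)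
    (hχsum : ∀ z : ℝ, ∑' i : ℤ, χ (z - i) = 1) (hsum : ∀ z : ℝ, Summable fun i : ℤ ↦ |χ (z - i)|)
    (hK : ∀ z : ℝ, ∑' i : ℤ, |χ (z - i)| ≤ K)
    (hβsumm : ∀ z : ℝ, Summable fun i : ℤ ↦ |χ (z - i)| * |z - i| ^ β)
    (hmb : ∀ z : ℝ, ∑' i : ℤ, |χ (z - i)| * |z - i| ^ β ≤ mb)
    {α : ℝ} (hα : 0 ≤ α) {g : ℝ → ℝ} (hg : Continuous g) (hgs : HasCompactSupport g) (R : ℝ) :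
    TendstoUniformlyOn (fun w ↦ T χ α w g) g atTop (Set.Icc (-R) R) := by
  rw [Metric.tendstoUniformlyOn_iff]
  intro ε hε
  obtain ⟨x₀, hx₀⟩ := hg.abs.exists_forall_ge_of_hasCompactSupport hgs.abs
  have hK0 : 0 ≤ K := (tsum_nonneg fun _ ↦ abs_nonneg _).trans (hK 0)
  set ε₁ := ε / (2 * (K + 1))
  obtain ⟨δ, hδ, hδg⟩ := Metric.uniformContinuous_iff.1
    (hgs.uniformContinuous_of_continuous hg) ε₁ (by positivity)
  have hfar : Tendsto (fun w ↦ 2 * |g x₀| * mb / (δ / 2 * w) ^ β) atTop (𝓝 0) :=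
    tendsto_const_nhds.div_atTop
      ((tendsto_rpow_atTop hβ).comp (tendsto_id.const_mul_atTop (by positivity)))
  filter_upwards [hfar.eventually_lt_const (half_pos hε), eventually_gt_atTop 0,
    eventually_gt_atTop (2 * (1 + R) / δ)] with w hwfar hw hwR y hy
  rw [div_lt_iff₀ hδ] at hwR
  have hyR : |y| ≤ R := abs_le.2 hy
  have hnear : ∀ i : ℤ, |w * y - i| ≤ δ / 2 * w → |kantorovichMean α w g i - g y| ≤ ε₁ := by
    refine fun i hi ↦ abs_kantorovichMean_sub_le hα hg fun s hs ↦ ?_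
    rw [← Real.dist_eq]
    refine (hδg ?_).le
    have hsplit : (i + s) / (w + 1) - y = ((i - w * y) + (s - y)) / (w + 1) := by
      field_simp
      ring
    have hsy : |s - y| ≤ 1 + R := (abs_sub _ _).trans (add_le_add (abs_le.2 ⟨by linarith [hs.1],
      hs.2⟩) hyR)
    have hw1 : (0:ℝ) < w + 1 := by linarith
    rw [Real.dist_eq, hsplit, abs_div, abs_of_pos hw1, div_lt_iff₀ hw1]
    calc |(i - w * y) + (s - y)| ≤ |w * y - i| + |s - y| := by
          rw [← abs_neg (w * y - i), neg_sub]; exact abs_add_le _ _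
      _ < δ * (w + 1) := by nlinarith
  have hfar' : ∀ i : ℤ, |kantorovichMean α w g i - g y| ≤ 2 * |g x₀| := fun i ↦
    (abs_sub _ _).trans (by linarith [abs_kantorovichMean_le (w := w) hα hg hx₀ i, hx₀ y])
  have hε₁K : ε₁ * K ≤ ε / 2 := by
    rw [div_mul_eq_mul_div, div_le_iff₀ (by positivity)]
    nlinarith
  calc dist (g y) (T χ α w g y) = |∑' i : ℤ, χ (w * y - i) * kantorovichMean α w g i - g y| := by
        rw [dist_comm, Real.dist_eq, T_eq_tsum_kantorovichMean]
    _ ≤ ε₁ * K + 2 * |g x₀| * mb / (δ / 2 * w) ^ β :=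
        abs_tsum_kernel_mul_sub_le hβ (hχsum _) (hsum _) (hK _) (hβsumm _) (hmb _)
          (by positivity) (by positivity) hnear hfar'
    _ < ε / 2 + ε / 2 := add_lt_add_of_le_of_lt hε₁K hwfar
    _ = ε := add_halves ε

theorem setLIntegral_compl_Icc_enorm_comp_le {χ : ℝ → ℝ} {M w : ℝ} (hM : 1 ≤ M) (hw : 2 ≤ w)
    {i : ℤ} (hi : |(i : ℝ)| ≤ M * (w + 1) + 1) :
    ∫⁻ y in (Set.Icc (-(3 * M)) (3 * M))ᶜ, ‖χ (w * y - i)‖ₑ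
      ≤ ENNReal.ofReal w⁻¹ * ∫⁻ v in {v | M * w ≤ |v|}, ‖χ v‖ₑ := by
  have hA : MeasurableSet {v : ℝ | M * w ≤ |v|} :=
    measurableSet_le measurable_const continuous_abs.measurable
  have hfar : ∀ y ∉ Set.Icc (-(3 * M)) (3 * M), M * w ≤ |w * y - i| := by
    intro y hy
    have hy3 : 3 * M < |y| := not_le.1 fun h ↦ hy (abs_le.1 h)
    have hwy : |w * y| = w * |y| := by rw [abs_mul, abs_of_pos (by linarith)]
    nlinarith [abs_sub_abs_le_abs_sub (w * y) i]
  calc ∫⁻ y in (Set.Icc (-(3 * M)) (3 * M))ᶜ, ‖χ (w * y - i)‖ₑ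
      ≤ ∫⁻ y, {v : ℝ | M * w ≤ |v|}.indicator (fun v ↦ ‖χ v‖ₑ) (w * y - i) := by
        rw [← lintegral_indicator measurableSet_Icc.compl]
        refine lintegral_mono fun y ↦ ?_
        by_cases hy : y ∈ Set.Icc (-(3 * M)) (3 * M)
        · rw [Set.indicator_of_notMem (Set.notMem_compl_iff.2 hy)]
          exact zero_le
        · rw [Set.indicator_of_mem (Set.mem_compl hy),
            Set.indicator_of_mem (s := {v : ℝ | M * w ≤ |v|}) (hfar y hy)]
    _ = ENNReal.ofReal w⁻¹ * ∫⁻ v in {v | M * w ≤ |v|}, ‖χ v‖ₑ := by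
        rw [lintegral_comp_mul_sub (by linarith), lintegral_indicator hA]

theorem setLIntegral_compl_Icc_abs_T_le {χ : ℝ → ℝ} (hχ : AEMeasurable χ)
    (hsum : ∀ z : ℝ, Summable fun i : ℤ ↦ |χ (z - i)|) {α : ℝ} (hα : 0 ≤ α) {g : ℝ → ℝ}
    (hg : Continuous g) {G M : ℝ} (hG : ∀ x, |g x| ≤ G) (hM : 1 ≤ M)
    (hgM : ∀ x, M < |x| → g x = 0) {w : ℝ} (hw : 2 ≤ w) :
    ∫⁻ y in (Set.Icc (-(3 * M)) (3 * M))ᶜ, ENNReal.ofReal |T χ α w g y|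
      ≤ ENNReal.ofReal (G * (4 * M + 3)) * ∫⁻ v in {v | M * w ≤ |v|}, ‖χ v‖ₑ := by
  set m := kantorovichMean α w g
  set N := M * (w + 1) + 1 with hN
  set τ := ∫⁻ v in {v | M * w ≤ |v|}, ‖χ v‖ₑ
  have hG0 : 0 ≤ G := (abs_nonneg _).trans (hG 0)
  have hterm : ∀ i : ℤ, ENNReal.ofReal |m i| *
      ∫⁻ y in (Set.Icc (-(3 * M)) (3 * M))ᶜ, ‖χ (w * y - i)‖ₑ
      ≤ ENNReal.ofReal |m i| * (ENNReal.ofReal w⁻¹ * τ) := by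
    intro i
    by_cases hi : (i : ℝ) ∈ Set.Icc (-N) N
    · gcongr
      exact setLIntegral_compl_Icc_enorm_comp_le hM hw (abs_le.2 hi)
    · rw [show m i = 0 from kantorovichMean_eq_zero hα hg (by linarith) hgM hi]
      simp
  have hqmp : ∀ i : ℤ, Measure.QuasiMeasurePreserving (fun y : ℝ ↦ w * y - i) :=
    fun i ↦ (measurePreserving_sub_right volume (i : ℝ)).quasiMeasurePreserving.comp
      (Measure.quasiMeasurePreserving_smul volume (by linarith : w ≠ 0))
  calc ∫⁻ y in (Set.Icc (-(3 * M)) (3 * M))ᶜ, ENNReal.ofReal |T χ α w g y|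
      ≤ ∫⁻ y in (Set.Icc (-(3 * M)) (3 * M))ᶜ,
          ∑' i : ℤ, ENNReal.ofReal |m i| * ‖χ (w * y - i)‖ₑ :=
        lintegral_mono (ofReal_abs_T_le_tsum hsum hα hg hG w)
    _ = ∑' i : ℤ, ENNReal.ofReal |m i| *
          ∫⁻ y in (Set.Icc (-(3 * M)) (3 * M))ᶜ, ‖χ (w * y - i)‖ₑ := by
        rw [lintegral_tsum (f := fun (i : ℤ) (y : ℝ) ↦ ENNReal.ofReal |m i| * ‖χ (w * y - i)‖ₑ)
          fun i ↦ ((hχ.enorm.comp_quasiMeasurePreserving (hqmp i)).const_mul _).restrict]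
        simp_rw [lintegral_const_mul' _ _ ENNReal.ofReal_ne_top]
    _ ≤ ∑' i : ℤ, ENNReal.ofReal |m i| * (ENNReal.ofReal w⁻¹ * τ) := ENNReal.tsum_le_tsum hterm
    _ = (∑' i : ℤ, ENNReal.ofReal |m i|) * ENNReal.ofReal w⁻¹ * τ := by
        rw [ENNReal.tsum_mul_right, mul_assoc]
    _ ≤ ENNReal.ofReal (G * (2 * N + 1)) * ENNReal.ofReal w⁻¹ * τ := by
        gcongr
        exact tsum_ofReal_abs_kantorovichMean_le hα hg hG (by linarith) (by linarith) hgM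
    _ ≤ ENNReal.ofReal (G * (4 * M + 3)) * τ := by
        rw [← ENNReal.ofReal_mul (by positivity)]
        refine mul_le_mul_left (ENNReal.ofReal_le_ofReal ?_) τ
        rw [mul_assoc, ← div_eq_mul_inv]
        refine mul_le_mul_of_nonneg_left ((div_le_iff₀ (by linarith)).2 ?_) hG0
        rw [hN]
        nlinarith

theorem tendsto_lintegral_abs_T_sub {χ : ℝ → ℝ} (hχ : Integrable χ) {β K mb : ℝ} (hβ : 0 < β)
    (hχsum : ∀ z : ℝ, ∑' i : ℤ, χ (z - i) = 1) (hsum : ∀ z : ℝ, Summable fun i : ℤ ↦ |χ (z - i)|)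
    (hK : ∀ z : ℝ, ∑' i : ℤ, |χ (z - i)| ≤ K)
    (hβsumm : ∀ z : ℝ, Summable fun i : ℤ ↦ |χ (z - i)| * |z - i| ^ β)
    (hmb : ∀ z : ℝ, ∑' i : ℤ, |χ (z - i)| * |z - i| ^ β ≤ mb)
    {α : ℝ} (hα : 0 ≤ α) {g : ℝ → ℝ} (hg : Continuous g) (hgs : HasCompactSupport g) :
    Tendsto (fun w ↦ ∫⁻ y, ENNReal.ofReal |T χ α w g y - g y|) atTop (𝓝 0) := by
  obtain ⟨x₀, hx₀⟩ := hg.abs.exists_forall_ge_of_hasCompactSupport hgs.abs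
  obtain ⟨M₀, hM₀⟩ := hgs.isBounded.subset_closedBall 0
  set M := max M₀ 1
  have hM : 1 ≤ M := le_max_right _ _
  have hgM : ∀ x, M < |x| → g x = 0 := fun x hx ↦ image_eq_zero_of_notMem_tsupport fun hmem ↦ by
    have := hM₀ hmem
    rw [Metric.mem_closedBall, Real.dist_eq, sub_zero] at this
    linarith [le_max_left M₀ 1]
  have hS : Tendsto (fun w ↦ ∫⁻ y in Set.Icc (-(3 * M)) (3 * M),
      ENNReal.ofReal |T χ α w g y - g y|) atTop (𝓝 0) :=
    (tendstoUniformlyOn_T hβ hχsum hsum hK hβsumm hmb hα hg hgs (3 * M)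
      ).tendsto_setLIntegral_ofReal_abs_sub measurableSet_Icc (by simp)
  have htail : Tendsto (fun w ↦ ENNReal.ofReal (|g x₀| * (4 * M + 3)) *
      ∫⁻ v in {v | M * w ≤ |v|}, ‖χ v‖ₑ) atTop (𝓝 0) := by
    simpa only [mul_zero, Function.comp_def, id] using ENNReal.Tendsto.const_mul
      (hχ.tendsto_setLIntegral_abs_ge.comp (tendsto_id.const_mul_atTop (by positivity : 0 < M)))
      (Or.inr ENNReal.ofReal_ne_top)
  have hSc : Tendsto (fun w ↦ ∫⁻ y in (Set.Icc (-(3 * M)) (3 * M))ᶜ,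
      ENNReal.ofReal |T χ α w g y - g y|) atTop (𝓝 0) := by
    refine tendsto_of_tendsto_of_tendsto_of_le_of_le' tendsto_const_nhds htail
      (.of_forall fun _ ↦ zero_le) ?_
    filter_upwards [eventually_ge_atTop 2] with w hw
    refine le_trans (setLIntegral_mono' measurableSet_Icc.compl fun y hy ↦ ?_)
      (setLIntegral_compl_Icc_abs_T_le hχ.aemeasurable hsum hα hg hx₀ hM hgM hw)
    rw [hgM y (by linarith [not_le.1 fun h ↦ hy (abs_le.1 h)]), sub_zero]
  simpa only [lintegral_add_compl _ measurableSet_Icc, add_zero] using hS.add hSc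

theorem stmt6_general (χ : ℝ → ℝ)
    (hχInt : Integrable χ)
    (hχbd : ∃ d : ℝ, 0 < d ∧ ∃ C : ℝ, ∀ z ∈ Set.Icc (-d) d, |χ z| ≤ C)
    (hχsum : ∀ z : ℝ, ∑' i : ℤ, χ (z - ↑i) = 1)
    (β : ℝ) (hβ : 0 < β)
    (hβsumm : ∀ z : ℝ, Summable fun i : ℤ => |χ (z - ↑i)| * |z - ↑i| ^ β)
    (hβbdd : BddAbove (Set.range fun z : ℝ => ∑' i : ℤ, |χ (z - ↑i)| * |z - ↑i| ^ β))
    (α : ℝ) (hα : 0 < α)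
    (η : ℝ → ℝ) (hηconv : ConvexOn ℝ (Set.Ici 0) η)
    (hη0 : η 0 = 0)
    (g : ℝ → ℝ) (hgCont : Continuous g) (hgSupp : HasCompactSupport g) :
    ∀ l : ℝ, 0 < l →
      Tendsto (fun w : ℝ => ∫⁻ y : ℝ, ENNReal.ofReal (η (l * |T χ α w g y - g y|)))
        atTop (nhds 0) := by
  intro l hl
  obtain ⟨d, hd, C, hC⟩ := hχbd
  have hmb : ∀ z : ℝ, ∑' i : ℤ, |χ (z - i)| * |z - i| ^ β
      ≤ ⨆ z : ℝ, ∑' i : ℤ, |χ (z - i)| * |z - i| ^ β := le_ciSup hβbdd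
  have hsum : ∀ z : ℝ, Summable fun i : ℤ ↦ |χ (z - i)| :=
    fun z ↦ summable_abs_kernel hd hC hβ (hβsumm z)
  have hK : ∀ z : ℝ, ∑' i : ℤ, |χ (z - i)| ≤ mom0 χ :=
    le_ciSup ⟨_, Set.forall_mem_range.2 fun z ↦ tsum_abs_kernel_le hd hC hβ (hβsumm z) (hmb z)⟩
  obtain ⟨x₀, hx₀⟩ := hgCont.abs.exists_forall_ge_of_hasCompactSupport hgSupp.abs
  have hL1 := tendsto_lintegral_abs_T_sub hχInt hβ hχsum hsum hK hβsumm hmb hα.le hgCont hgSupp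
  refine tendsto_lintegral_ofReal_comp_of_tendsto hηconv hη0 (fun _ _ ↦ by positivity)
    (B := l * (|g x₀| * mom0 χ + |g x₀|)) (fun w y ↦ ?_) ?_
  · gcongr
    exact (abs_sub _ _).trans (add_le_add (abs_T_le hsum hK hα.le hgCont hx₀ w y) (hx₀ y))
  · simpa only [ENNReal.ofReal_mul hl.le, lintegral_const_mul' _ _ ENNReal.ofReal_ne_top,
      mul_zero] using ENNReal.Tendsto.const_mul hL1 (Or.inr ENNReal.ofReal_ne_top)

theorem stmt6 (χ : ℝ → ℝ)
    (hχInt : Integrable χ)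
    (hχbd : ∃ d : ℝ, 0 < d ∧ ∃ C : ℝ, ∀ z ∈ Set.Icc (-d) d, |χ z| ≤ C)
    (hχsum : ∀ z : ℝ, ∑' i : ℤ, χ (z - ↑i) = 1)
    (β : ℝ) (hβ : 0 < β)
    (hβsumm : ∀ z : ℝ, Summable fun i : ℤ => |χ (z - ↑i)| * |z - ↑i| ^ β)
    (hβbdd : BddAbove (Set.range fun z : ℝ => ∑' i : ℤ, |χ (z - ↑i)| * |z - ↑i| ^ β))
    (α : ℝ) (hα : 0 < α)
    (η : ℝ → ℝ) (hηconv : ConvexOn ℝ (Set.Ici 0) η)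
    (hηmono : MonotoneOn η (Set.Ici 0)) (hη0 : η 0 = 0)
    (hηpos : ∀ x : ℝ, 0 < x → 0 < η x)
    (g : ℝ → ℝ) (hgCont : Continuous g) (hgSupp : HasCompactSupport g) :
    ∀ l : ℝ, 0 < l →
      Tendsto (fun w : ℝ => ∫⁻ y : ℝ, ENNReal.ofReal (η (l * |T χ α w g y - g y|)))
        atTop (nhds 0) :=
  stmt6_general χ hχInt hχbd hχsum β hβ hβsumm hβbdd α hα η hηconv hη0 g hgCont hgSupp
end

section
/- For the Fejér kernel F(y) := (1/2) · sinc²(y/2), where sinc(y) := sin(πy)/(πy) for y ≠ 0 and sinc(0) := 1, and for every 0 < β < 1, the discrete absolute moment of order β is finite: m_β(F) := sup_{z∈ℝ} ∑_{i∈ℤ} |F(z − i)| · |z − i|^β < ∞. -/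
open Real Filter MeasureTheory

/-- `sinc y = sin(πy)/(πy)` for `y ≠ 0`, and `sinc 0 = 1`. -/
noncomputable def sinc (y : ℝ) : ℝ :=
  if y = 0 then 1 else Real.sin (Real.pi * y) / (Real.pi * y)

/-- The Fejér kernel `F(y) = (1/2) sinc²(y/2)`. -/
noncomputable def fejer (y : ℝ) : ℝ := (1 / 2) * (_root_.sinc (y / 2)) ^ 2

/-!
The Fejér kernel decays like `(1 + |y|)⁻²`, so its `β`-th moment terms decay like
`(1 + |y|) ^ (β - 2)` with `2 - β > 1`. After shifting the summation index by `⌊z⌋`, the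
translates `(1 + |z - i|) ^ (-p)` are dominated, uniformly in `z`, by the summable sequence
`2 ^ p * (1 + |k|) ^ (-p)`.
-/

lemma summable_one_add_abs_int_rpow_neg {p : ℝ} (hp : 1 < p) :
    Summable fun k : ℤ => (1 + |(k : ℝ)|) ^ (-p) := by
  have hnat : Summable fun n : ℕ => (1 + |(n : ℝ)|) ^ (-p) := by
    have := (summable_nat_add_iff 1).mpr (Real.summable_nat_rpow.mpr (by linarith : -p < -1))
    refine this.congr fun n => ?_
    push_cast
    rw [abs_of_nonneg n.cast_nonneg, add_comm]
  exact .of_nat_of_neg (by simpa using hnat) (by simpa using hnat)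

lemma one_add_abs_sub_int_rpow_neg_le {p : ℝ} (hp : 0 ≤ p) (z : ℝ) (i : ℤ) :
    (1 + |z - i|) ^ (-p) ≤ 2 ^ p * (1 + |((i - ⌊z⌋ : ℤ) : ℝ)|) ^ (-p) := by
  have hfloor : |z - ⌊z⌋| < 1 := by
    rw [Int.self_sub_floor, abs_of_nonneg (Int.fract_nonneg z)]
    exact Int.fract_lt_one z
  have hshift : (1 + |((i - ⌊z⌋ : ℤ) : ℝ)|) / 2 ≤ 1 + |z - i| := by
    have := abs_sub_le (i : ℝ) z ⌊z⌋
    rw [abs_sub_comm (i : ℝ) z] at this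
    push_cast
    linarith [abs_nonneg (z - i)]
  calc (1 + |z - i|) ^ (-p) ≤ ((1 + |((i - ⌊z⌋ : ℤ) : ℝ)|) / 2) ^ (-p) :=
        Real.rpow_le_rpow_of_nonpos (by positivity) hshift (by linarith)
    _ = 2 ^ p * (1 + |((i - ⌊z⌋ : ℤ) : ℝ)|) ^ (-p) := by
        rw [Real.div_rpow (by positivity) zero_le_two, Real.rpow_neg zero_le_two, div_inv_eq_mul,
          mul_comm]

theorem summable_sub_int_and_bddAbove_tsum_of_rpow_decay {g : ℝ → ℝ} {C p : ℝ} (hp : 1 < p)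
    (hg0 : ∀ y, 0 ≤ g y) (hg : ∀ y, g y ≤ C * (1 + |y|) ^ (-p)) :
    (∀ z : ℝ, Summable fun i : ℤ => g (z - i)) ∧
      BddAbove (Set.range fun z : ℝ => ∑' i : ℤ, g (z - i)) := by
  have hC : 0 ≤ C := by simpa using (hg0 0).trans (hg 0)
  set w : ℤ → ℝ := fun k => C * (2 ^ p * (1 + |(k : ℝ)|) ^ (-p))
  have hw : Summable w := ((summable_one_add_abs_int_rpow_neg hp).mul_left _).mul_left _
  have hw_shift (z : ℝ) : Summable fun i : ℤ => w (i - ⌊z⌋) :=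
    (Equiv.subRight ⌊z⌋).summable_iff.mpr hw
  have hle (z : ℝ) (i : ℤ) : g (z - i) ≤ w (i - ⌊z⌋) :=
    (hg _).trans (mul_le_mul_of_nonneg_left (one_add_abs_sub_int_rpow_neg_le (by linarith) z i) hC)
  have hsum (z : ℝ) : Summable fun i : ℤ => g (z - i) :=
    (hw_shift z).of_nonneg_of_le (fun i => hg0 _) (hle z)
  refine ⟨hsum, ∑' k, w k, ?_⟩
  rintro _ ⟨z, rfl⟩
  calc ∑' i : ℤ, g (z - i) ≤ ∑' i : ℤ, w (i - ⌊z⌋) := (hsum z).tsum_le_tsum (hle z) (hw_shift z)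
    _ = ∑' k, w k := (Equiv.subRight ⌊z⌋).tsum_eq w

lemma sinc_eq_real_sinc (y : ℝ) : _root_.sinc y = Real.sinc (π * y) := by
  simp [_root_.sinc, Real.sinc, Real.pi_ne_zero]

lemma one_add_abs_sq_mul_sinc_sq_le (x : ℝ) : (1 + |x|) ^ 2 * Real.sinc x ^ 2 ≤ 4 := by
  have hsin : x ^ 2 * Real.sinc x ^ 2 ≤ 1 := by
    rcases eq_or_ne x 0 with rfl | hx
    · simp
    rw [Real.sinc_of_ne_zero hx, ← mul_pow, mul_div_cancel₀ _ hx]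
    exact sin_sq_le_one x
  have hsinc : Real.sinc x ^ 2 ≤ 1 := by
    rw [← sq_abs]
    exact pow_le_one₀ (abs_nonneg _) (Real.abs_sinc_le_one x)
  nlinarith [sq_nonneg (1 - |x|), sq_abs x, sq_nonneg (Real.sinc x)]

lemma fejer_nonneg (y : ℝ) : 0 ≤ fejer y := by
  unfold fejer
  positivity

lemma one_add_abs_sq_mul_fejer_le (y : ℝ) : (1 + |y|) ^ 2 * fejer y ≤ 2 := by
  have hy : |y| ≤ |π * (y / 2)| := by
    rw [abs_mul, abs_div, abs_of_pos Real.pi_pos, abs_two]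
    nlinarith [Real.pi_gt_three, abs_nonneg y]
  have h := one_add_abs_sq_mul_sinc_sq_le (π * (y / 2))
  have hmono : (1 + |y|) ^ 2 ≤ (1 + |π * (y / 2)|) ^ 2 := by gcongr
  rw [fejer, sinc_eq_real_sinc]
  nlinarith [sq_nonneg (Real.sinc (π * (y / 2)))]

lemma abs_fejer_mul_abs_rpow_le {β : ℝ} (hβ : 0 ≤ β) (y : ℝ) :
    |fejer y| * |y| ^ β ≤ 2 * (1 + |y|) ^ (-(2 - β)) := by
  have ht : 0 < 1 + |y| := by positivity
  have hF : fejer y ≤ 2 / (1 + |y|) ^ 2 := by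
    rw [le_div_iff₀ (by positivity), mul_comm]
    exact one_add_abs_sq_mul_fejer_le y
  calc |fejer y| * |y| ^ β ≤ 2 / (1 + |y|) ^ 2 * (1 + |y|) ^ β := by
        rw [abs_of_nonneg (fejer_nonneg y)]
        gcongr
        linarith
    _ = 2 * (1 + |y|) ^ (-(2 - β)) := by
        rw [neg_sub, Real.rpow_sub ht, Real.rpow_two]
        ring

theorem stmt15 (β : ℝ) (hβ0 : 0 < β) (hβ1 : β < 1) :
    (∀ z : ℝ, Summable fun i : ℤ => |fejer (z - ↑i)| * |z - ↑i| ^ β) ∧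
    BddAbove (Set.range fun z : ℝ => ∑' i : ℤ, |fejer (z - ↑i)| * |z - ↑i| ^ β) :=
  summable_sub_int_and_bddAbove_tsum_of_rpow_decay (g := fun y => |fejer y| * |y| ^ β)
    (by linarith) (fun y => by positivity) (abs_fejer_mul_abs_rpow_le hβ0.le)
end

section
/- For the Fejér kernel F(y) := (1/2) · sinc²(y/2), where sinc(y) := sin(πy)/(πy) for y ≠ 0 and sinc(0) := 1, one has ∑_{i∈ℤ} F(z − i) = 1 for every z ∈ ℝ. -/
/-!
Differentiating the Mittag-Leffler expansion of `π cot (π z)` gives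
`∑ₙ 1 / (z + n)² = π² / sin² (π z)` on the upper half-plane; letting `z = x + iε` with `ε → 0⁺`
extends it to real `x ∉ ℤ` by dominated convergence, since `|x + iε + n| ≥ |x + n|`.
Equivalently `∑ₙ sinc² (x - n) = 1` for every real `x`. Splitting `∑ᵢ F (z - i)` into even and odd
`i` gives two such sums, at `z / 2` and `(z - 1) / 2`, each weighted by `1 / 2`.
-/

open Real Filter MeasureTheory

open Topology

theorem HasSum.int_even_add_odd {M : Type*} [AddCommMonoid M] [TopologicalSpace M]
    [ContinuousAdd M] {f : ℤ → M} {a b : M} (he : HasSum (fun k => f (2 * k)) a)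
    (ho : HasSum (fun k => f (2 * k + 1)) b) : HasSum f (a + b) := by
  have h2 := mul_right_injective₀ (two_ne_zero' ℤ)
  replace ho := ((add_left_injective 1).comp h2).hasSum_range_iff.2 ho
  refine (h2.hasSum_range_iff.2 he).add_isCompl ?_ ho
  simpa [Function.comp_def] using Int.isCompl_even_odd

theorem Complex.hasDerivAt_cot {z : ℂ} (hz : Complex.sin z ≠ 0) :
    HasDerivAt Complex.cot (-1 / Complex.sin z ^ 2) z := by
  rw [show Complex.cot = Complex.cos / Complex.sin from funext Complex.cot_eq_cos_div_sin]
  refine ((Complex.hasDerivAt_cos z).div (Complex.hasDerivAt_sin z) hz).congr_deriv ?_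
  linear_combination (-1 / Complex.sin z ^ 2) * Complex.sin_sq_add_cos_sq z

theorem tsum_one_div_add_int_sq_of_im_pos {z : ℂ} (hz : 0 < z.im) :
    ∑' n : ℤ, 1 / (z + n) ^ 2 = π ^ 2 / Complex.sin (π * z) ^ 2 := by
  have hsin : Complex.sin (π * z) ≠ 0 :=
    sin_pi_mul_ne_zero (UpperHalfPlane.coe_mem_integerComplement ⟨z, hz⟩)
  have hderiv : HasDerivAt (fun w : ℂ => π * Complex.cot (π * w))
      (-π ^ 2 / Complex.sin (π * z) ^ 2) z :=
    (((Complex.hasDerivAt_cot hsin).comp z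
      ((hasDerivAt_id z).const_mul (π : ℂ))).const_mul (π : ℂ)).congr_deriv (by ring)
  have h := iteratedDerivWithin_cot_pi_mul_eq_mul_tsum_div_pow (k := 1) le_rfl hz
  rw [iteratedDerivWithin_one, derivWithin_of_isOpen UpperHalfPlane.isOpen_upperHalfPlaneSet hz,
    hderiv.deriv] at h
  simp only [Nat.reduceAdd, Nat.factorial_one, Nat.cast_one] at h
  linear_combination h

theorem summable_one_div_add_int_sq (x : ℝ) : Summable fun n : ℤ => 1 / (x + n) ^ 2 := by
  refine ((Real.summable_one_div_int_add_rpow x 2).2 one_lt_two).congr fun n => ?_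
  rw [Real.rpow_two, sq_abs, add_comm]

theorem hasSum_one_div_add_int_sq {x : ℝ} (hx : ∀ n : ℤ, x ≠ n) :
    HasSum (fun n : ℤ => 1 / (x + n) ^ 2) (π ^ 2 / Real.sin (π * x) ^ 2) := by
  have hxZ : (x : ℂ) ∈ Complex.integerComplement := by
    rintro ⟨n, hn⟩
    exact hx n (by exact_mod_cast hn.symm)
  have hxn : ∀ n : ℤ, (x : ℂ) + n ≠ 0 := Complex.integerComplement_add_ne_zero hxZ
  refine (summable_one_div_add_int_sq x).hasSum_iff.2 (Complex.ofReal_injective ?_)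
  push_cast [Complex.ofReal_tsum]
  set w : ℝ → ℂ := fun ε => x + ε * Complex.I
  have hw : Tendsto w (𝓝[>] 0) (𝓝 x) := by
    refine tendsto_nhdsWithin_of_tendsto_nhds ?_
    simpa [w] using ((Complex.continuous_ofReal.mul continuous_const).const_add (x : ℂ)).tendsto 0
  have hlhs : Tendsto (fun ε => ∑' n : ℤ, 1 / (w ε + n) ^ 2) (𝓝[>] 0)
      (𝓝 (∑' n : ℤ, 1 / ((x : ℂ) + n) ^ 2)) := by
    refine tendsto_tsum_of_dominated_convergence (summable_one_div_add_int_sq x)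
      (fun n => ?_) (Eventually.of_forall fun ε n => ?_)
    · simpa using ((hw.add_const (n : ℂ)).pow 2).inv₀ (pow_ne_zero 2 (hxn n))
    · have hre : (x + n) ^ 2 ≤ ‖w ε + n‖ ^ 2 := by
        simpa [w, sq_abs] using
          pow_le_pow_left₀ (abs_nonneg _) (Complex.abs_re_le_norm (w ε + n)) 2
      have hpos : 0 < (x + n) ^ 2 := by
        have : x + n ≠ 0 := by exact_mod_cast hxn n
        positivity
      rw [norm_div, norm_one, norm_pow]
      exact one_div_le_one_div_of_le hpos hre
  have hrhs : Tendsto (fun ε => (π : ℂ) ^ 2 / Complex.sin (π * w ε) ^ 2) (𝓝[>] 0)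
      (𝓝 (π ^ 2 / Complex.sin (π * x) ^ 2)) :=
    tendsto_const_nhds.div (((Complex.continuous_sin.tendsto _).comp (hw.const_mul _)).pow 2)
      (pow_ne_zero 2 (sin_pi_mul_ne_zero hxZ))
  refine tendsto_nhds_unique (hlhs.congr' ?_) hrhs
  filter_upwards [self_mem_nhdsWithin] with ε hε
  exact tsum_one_div_add_int_sq_of_im_pos (by simpa [w] using hε)

theorem sinc_intCast_of_ne_zero {n : ℤ} (hn : n ≠ 0) : _root_.sinc n = 0 := by
  rw [_root_.sinc, if_neg (Int.cast_ne_zero.2 hn), mul_comm, Real.sin_int_mul_pi, zero_div]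

theorem hasSum_sinc_sq_sub_int (x : ℝ) : HasSum (fun n : ℤ => _root_.sinc (x - n) ^ 2) 1 := by
  by_cases hx : ∃ k : ℤ, x = k
  · obtain ⟨k, rfl⟩ := hx
    convert hasSum_ite_eq k (1 : ℝ) using 2 with n
    split_ifs with h
    · simp [h, _root_.sinc]
    · rw [← Int.cast_sub, sinc_intCast_of_ne_zero (sub_ne_zero.2 (Ne.symm h)),
        zero_pow two_ne_zero]
  push Not at hx
  have hsin : Real.sin (π * x) ≠ 0 := by
    rw [mul_comm, Ne, Real.sin_eq_zero_iff]
    rintro ⟨n, hn⟩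
    exact hx n (mul_right_cancel₀ Real.pi_ne_zero hn).symm
  have h := ((Equiv.neg ℤ).hasSum_iff.2 (hasSum_one_div_add_int_sq hx)).mul_left
    (Real.sin (π * x) ^ 2 / π ^ 2)
  rw [div_mul_div_cancel₀ (pow_ne_zero 2 Real.pi_ne_zero), div_self (pow_ne_zero 2 hsin)] at h
  refine h.congr_fun fun n => ?_
  have hxn : x - n ≠ 0 := sub_ne_zero.2 (hx n)
  rw [_root_.sinc, if_neg hxn, div_pow, mul_sub, mul_comm π n, Real.sin_sub_int_mul_pi, mul_pow,
    ← sq_abs ((-1 : ℝ) ^ n), abs_neg_one_zpow]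
  simp only [one_pow, one_mul, sub_eq_add_neg, one_div, Equiv.neg_apply, Function.comp_apply,
    Int.cast_neg]
  field_simp

theorem stmt16 : ∀ z : ℝ, HasSum (fun i : ℤ => fejer (z - ↑i)) 1 := by
  intro z
  refine add_halves (1 : ℝ) ▸ HasSum.int_even_add_odd ?_ ?_
  · refine ((hasSum_sinc_sq_sub_int (z / 2)).div_const 2).congr_fun fun m => ?_
    rw [fejer]; push_cast; ring_nf
  · refine ((hasSum_sinc_sq_sub_int ((z - 1) / 2)).div_const 2).congr_fun fun m => ?_
    rw [fejer]; push_cast; ring_nf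
end
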